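/- Let G be a k-regular, k-connected bipartite simple graph. If G contains ⌊k/2⌋ completely independent spanning trees, then ⌈((|V(G)|/2) − 1)/⌈k/2⌉⌉ ≤ ⌊(|V(G)|/2)/⌊k/2⌋⌋. (Note that a k-regular bipartite graph with k > 0 has the same number of vertices in each part, so |V(G)| is even.) -/

import Mathlib

open SimpleGraph

/-- `T` is a spanning tree of `G`: a subgraph of `G` (on the same vertex set) that is a tree. -/
def IsSpanningTreeOf {V : Type*} (G T : SimpleGraph V) : Prop :=
  T ≤ G ∧ T.IsTree

/-- A family of spanning trees of `G` are *completely independent* if for every pair of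
distinct vertices `x ≠ y` and distinct indices `i ≠ j`, the (unique) paths from `x` to `y`
in `T i` and `T j` share no edges, and share no vertices except `x` and `y`. -/
def AreCISTs {V : Type*} {k : ℕ} (G : SimpleGraph V) (T : Fin k → SimpleGraph V) : Prop :=
  (∀ i, IsSpanningTreeOf G (T i)) ∧
  ∀ x y : V, x ≠ y → ∀ i j : Fin k, i ≠ j →
    ∀ p : (T i).Walk x y, ∀ q : (T j).Walk x y, p.IsPath → q.IsPath →
      (∀ e ∈ p.edges, e ∉ q.edges) ∧
      (∀ v ∈ p.support, v ∈ q.support → v = x ∨ v = y)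

/-- The `n`-dimensional hypercube: vertices are functions `Fin n → ZMod 2`, adjacent iff
they differ in exactly one coordinate. -/
def hypercube (n : ℕ) : SimpleGraph (Fin n → ZMod 2) where
  Adj x y := hammingDist x y = 1
  symm := ⟨fun x y h => (hammingDist_comm y x).trans h⟩
  loopless := ⟨fun x h => by simp [hammingDist_self] at h⟩

/-- `G` is `k`-connected: it has more than `k` vertices and remains connected after
removing any set of fewer than `k` vertices. -/
def KConnected {V : Type*} (G : SimpleGraph V) (k : ℕ) : Prop :=
  k < Nat.card V ∧
  ∀ s : Finset V, s.card < k → ((G.induce ((↑s : Set V)ᶜ))).Connected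

/-- `G` is `k`-regular: every vertex has exactly `k` neighbours. -/
def IsKRegular {V : Type*} (G : SimpleGraph V) (k : ℕ) : Prop :=
  ∀ v : V, (G.neighborSet v).ncard = k

/-! If `r = ⌊k/2⌋ ≥ 1`, every vertex has degree at least `1` in each of the `r` edge-disjoint
trees, hence degree at most `k - r + 1 = ⌈k/2⌉ + 1` in each of them. Let `m = |X| = |Y|`.
A spanning tree has `2m - 1` edges, each with exactly one end in `X`; if `I` is the set of
its internal vertices in `X`, then `2m - 1 ≤ (m - |I|) + (⌈k/2⌉ + 1) |I|`, i.e.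
`m - 1 ≤ ⌈k/2⌉ |I|`. Complete independence makes every vertex internal in at most one tree,
so the smallest `I` satisfies `r |I| ≤ m`, and `|I|` lies between the two sides of the
inequality. For `k = 1` the same edge count applied to the connected graph `G` itself gives
`m ≤ 1`. -/

open Finset Function

theorem Finset.sum_le_card_add_mul_card_filter {ι : Type*} (s : Finset ι) (f : ι → ℕ)
    {b : ℕ} (hf : ∀ x ∈ s, f x ≤ b + 1) :
    ∑ x ∈ s, f x ≤ #s + b * #{x ∈ s | 2 ≤ f x} :=
  calc ∑ x ∈ s, f x ≤ ∑ x ∈ s, (1 + b * if 2 ≤ f x then 1 else 0) :=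
        sum_le_sum fun x hx => by have := hf x hx; split_ifs <;> omega
    _ = #s + b * #{x ∈ s | 2 ≤ f x} := by rw [sum_add_distrib, ← mul_sum, sum_boole]; simp

theorem Finset.exists_card_mul_card_le_of_pairwise_disjoint {ι α : Type*} [Fintype ι]
    [Nonempty ι] [DecidableEq α] {s : Finset α} {t : ι → Finset α} (hts : ∀ i, t i ⊆ s)
    (hdisj : Pairwise (Disjoint on t)) : ∃ i, Fintype.card ι * #(t i) ≤ #s := by
  obtain ⟨i, -, hi⟩ := exists_min_image univ (fun i => #(t i)) univ_nonempty
  refine ⟨i, ?_⟩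
  calc Fintype.card ι * #(t i) = ∑ _j, #(t i) := by simp
    _ ≤ ∑ j, #(t j) := sum_le_sum fun j _ => hi j (mem_univ j)
    _ = #(univ.biUnion t) := (card_biUnion fun j _ l _ hjl => hdisj hjl).symm
    _ ≤ #s := card_le_card (biUnion_subset.2 fun j _ => hts j)

theorem Rat.floor_natCast_div_two (k : ℕ) : ⌊(k : ℚ) / 2⌋ = ↑(k / 2) := by
  exact_mod_cast Rat.floor_natCast_div_natCast k 2

theorem Rat.ceil_natCast_div_two (k : ℕ) : ⌈(k : ℚ) / 2⌉ = ↑((k + 1) / 2) := by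
  rw [Int.ceil_eq_iff]
  rcases Nat.even_or_odd' k with ⟨a, rfl | rfl⟩
  · rw [show (2 * a + 1) / 2 = a by omega]
    push_cast
    constructor <;> linarith
  · rw [show (2 * a + 1 + 1) / 2 = a + 1 by omega]
    push_cast
    constructor <;> linarith

theorem ceil_sub_one_div_le_floor_div {K : Type*} [Field K] [LinearOrder K]
    [IsStrictOrderedRing K] [FloorRing K] {m b r n : ℕ} (hb : 0 < b) (hr : 0 < r)
    (hm : m ≤ 1 + b * n) (hn : r * n ≤ m) : ⌈((m : K) - 1) / b⌉ ≤ ⌊(m : K) / r⌋ := by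
  refine le_trans (b := (n : ℤ)) (Int.ceil_le.2 ?_) (Int.le_floor.2 ?_)
  · rw [div_le_iff₀ (by exact_mod_cast hb), sub_le_iff_le_add']
    exact_mod_cast hm.trans_eq (by ring)
  · rw [le_div_iff₀ (by exact_mod_cast hr)]
    exact_mod_cast (mul_comm _ _).trans_le hn

theorem IsKRegular.degree_eq {V : Type*} {G : SimpleGraph V} {k : ℕ} (h : IsKRegular G k)
    (v : V) [Fintype (G.neighborSet v)] : G.degree v = k := by
  rw [← card_neighborSet_eq_degree, ← Nat.card_eq_fintype_card, Nat.card_coe_set_eq, h v]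

theorem KConnected.connected {V : Type*} {G : SimpleGraph V} {k : ℕ} (h : KConnected G k)
    (hk : 0 < k) : G.Connected := by
  have := h.2 ∅ (by simpa using hk)
  rw [coe_empty, Set.compl_empty] at this
  exact (induceUnivIso G).connected_iff.1 this

namespace SimpleGraph

variable {V : Type*}

theorem IsBipartiteWith.mono {G H : SimpleGraph V} {s t : Set V} (h : G.IsBipartiteWith s t)
    (hle : H ≤ G) : H.IsBipartiteWith s t :=
  ⟨h.disjoint, fun _ _ hadj => h.mem_of_adj (hle hadj)⟩

theorem IsBipartiteWith.card_eq_two_mul_of_degree_eq [Fintype V] [DecidableEq V]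
    {G : SimpleGraph V} [G.LocallyFinite] {s t : Finset V} (h : G.IsBipartiteWith ↑s ↑t)
    (hst : s ∪ t = univ) {k : ℕ} (hk : 0 < k) (hdeg : ∀ v, G.degree v = k) :
    Fintype.card V = 2 * #s := by
  have hsum := isBipartiteWith_sum_degrees_eq h
  simp only [hdeg, sum_const, smul_eq_mul] at hsum
  rw [← card_univ, ← hst, card_union_of_disjoint (disjoint_coe.1 h.disjoint),
    ← Nat.eq_of_mul_eq_mul_right hk hsum, two_mul]

theorem Connected.card_le_one_add_mul_card_filter [Fintype V] {H : SimpleGraph V}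
    [DecidableRel H.Adj] {s t : Finset V} (hconn : H.Connected) (hbip : H.IsBipartiteWith ↑s ↑t)
    (hcard : Fintype.card V = 2 * #s) {b : ℕ} (hdeg : ∀ v ∈ s, H.degree v ≤ b + 1) :
    #s ≤ 1 + b * #{v ∈ s | 2 ≤ H.degree v} := by
  have hedges : Fintype.card V ≤ #H.edgeFinset + 1 := by
    simpa [Nat.card_eq_fintype_card, edgeFinset_card] using
      hconn.card_vert_le_card_edgeSet_add_one
  have hsum := sum_le_card_add_mul_card_filter s (H.degree ·) hdeg
  rw [isBipartiteWith_sum_degrees_eq_card_edges hbip] at hsum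
  omega

theorem sum_degree_le_of_pairwise_disjoint [DecidableEq V] {ι : Type*} [Fintype ι]
    {G : SimpleGraph V} {T : ι → SimpleGraph V} [G.LocallyFinite] [∀ i, (T i).LocallyFinite]
    (hle : ∀ i, T i ≤ G) (hdisj : Pairwise (Disjoint on T))
    (v : V) : ∑ i, (T i).degree v ≤ G.degree v := by
  simp_rw [← card_neighborFinset_eq_degree]
  rw [← card_biUnion fun i _ j _ hij => Finset.disjoint_left.2 fun w hi hj =>
    disjoint_left.1 (hdisj hij) v w (by simpa using hi) (by simpa using hj)]
  refine card_le_card fun w hw => ?_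
  obtain ⟨i, -, hi⟩ := mem_biUnion.1 hw
  simpa using hle i (by simpa using hi)

/-- `x` and `y` lie in the same component of `H - v`. -/
def ReachableAvoiding (H : SimpleGraph V) (v x y : V) : Prop :=
  ∃ w : H.Walk x y, v ∉ w.support

theorem ReachableAvoiding.symm {H : SimpleGraph V} {v x y : V} (h : H.ReachableAvoiding v x y) :
    H.ReachableAvoiding v y x :=
  let ⟨w, hw⟩ := h
  ⟨w.reverse, by simpa using hw⟩

theorem ReachableAvoiding.trans {H : SimpleGraph V} {v x y z : V}
    (hxy : H.ReachableAvoiding v x y) (hyz : H.ReachableAvoiding v y z) :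
    H.ReachableAvoiding v x z :=
  let ⟨w₁, h₁⟩ := hxy
  let ⟨w₂, h₂⟩ := hyz
  ⟨w₁.append w₂, by simp [Walk.mem_support_append_iff, h₁, h₂]⟩

theorem IsTree.not_reachableAvoiding_of_adj {H : SimpleGraph V} (hH : H.IsTree) {v a b : V}
    (hab : a ≠ b) (ha : H.Adj v a) (hb : H.Adj v b) : ¬ H.ReachableAvoiding v a b := by
  classical
  rintro ⟨w, hw⟩
  have hpath : (Walk.cons ha.symm (Walk.cons hb Walk.nil)).IsPath := by
    simp [ha.ne', hb.ne, hab]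
  have hw_eq := (hH.existsUnique_path a b).unique w.toPath.2 hpath
  apply hw (w.support_toPath_subset_support _)
  simp [hw_eq]

end SimpleGraph

namespace AreCISTs

variable {V : Type*} {r : ℕ} {G : SimpleGraph V} {T : Fin r → SimpleGraph V}

theorem pairwise_disjoint (h : AreCISTs G T) : Pairwise (Disjoint on T) := by
  intro i j hij
  refine SimpleGraph.disjoint_left.2 fun x y hi hj => ?_
  have hp : (Walk.cons hi Walk.nil).IsPath := by simp [hi.ne]
  have hq : (Walk.cons hj Walk.nil).IsPath := by simp [hi.ne]
  simpa using (h.2 x y hi.ne i j hij _ _ hp hq).1 s(x, y)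

theorem degree_add_le [Fintype V] [DecidableEq V] [Nontrivial V] [DecidableRel G.Adj]
    [∀ i, DecidableRel (T i).Adj] (h : AreCISTs G T) (i : Fin r) (v : V) :
    (T i).degree v + (r - 1) ≤ G.degree v :=
  calc (T i).degree v + (r - 1) = (T i).degree v + #(univ.erase i) • 1 := by simp
    _ ≤ (T i).degree v + ∑ j ∈ univ.erase i, (T j).degree v := by
        gcongr
        exact card_nsmul_le_sum _ _ _ fun j _ =>
          (h.1 j).2.connected.preconnected.degree_pos_of_nontrivial v
    _ = ∑ j, (T j).degree v := add_sum_erase _ (fun j => (T j).degree v) (mem_univ i)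
    _ ≤ G.degree v :=
        sum_degree_le_of_pairwise_disjoint (fun j => (h.1 j).1) h.pairwise_disjoint v

theorem reachableAvoiding_or (h : AreCISTs G T) {i j : Fin r} (hij : i ≠ j) {v x y : V}
    (hx : x ≠ v) (hy : y ≠ v) :
    (T i).ReachableAvoiding v x y ∨ (T j).ReachableAvoiding v x y := by
  classical
  by_cases hxy : x = y
  · subst hxy
    exact .inl ⟨.nil, by simpa using hx.symm⟩
  obtain ⟨p⟩ := (h.1 i).2.connected.preconnected x y
  obtain ⟨q⟩ := (h.1 j).2.connected.preconnected x y
  by_contra! hvw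
  have hvp : v ∈ p.toPath.1.support := by_contra fun hv => hvw.1 ⟨_, hv⟩
  have hvq : v ∈ q.toPath.1.support := by_contra fun hv => hvw.2 ⟨_, hv⟩
  rcases (h.2 x y hxy i j hij _ _ p.toPath.2 q.toPath.2).2 v hvp hvq with rfl | rfl
  exacts [hx rfl, hy rfl]

theorem eq_of_one_lt_degree (h : AreCISTs G T) {i j : Fin r} {v : V}
    [Fintype ((T i).neighborSet v)] [Fintype ((T j).neighborSet v)]
    (hi : 1 < (T i).degree v) (hj : 1 < (T j).degree v) : i = j := by
  by_contra hij
  obtain ⟨a, ha, b, hb, hab⟩ := Finset.one_lt_card.1 hi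
  obtain ⟨c, hc, d, hd, hcd⟩ := Finset.one_lt_card.1 hj
  rw [mem_neighborFinset] at ha hb hc hd
  have hab_i := (h.1 i).2.not_reachableAvoiding_of_adj hab ha hb
  have hcd_j := (h.1 j).2.not_reachableAvoiding_of_adj hcd hc hd
  have hor {x y : V} (hx : x ≠ v) (hy : y ≠ v) := h.reachableAvoiding_or hij hx hy
  have hcd_i := (hor hc.ne' hd.ne').resolve_right hcd_j
  -- `c` and `d` share a component of `T i - v`, which contains at most one of `a`, `b`;
  -- the other one is joined to both `c` and `d` in `T j - v`.
  obtain ⟨x, hxv, hxc⟩ : ∃ x, x ≠ v ∧ ¬ (T i).ReachableAvoiding v x c := by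
    by_cases hac : (T i).ReachableAvoiding v a c
    · exact ⟨b, hb.ne', fun hbc => hab_i (hac.trans hbc.symm)⟩
    · exact ⟨a, ha.ne', hac⟩
  have hxd : ¬ (T i).ReachableAvoiding v x d := fun hxd => hxc (hxd.trans hcd_i.symm)
  exact hcd_j (((hor hxv hc.ne').resolve_left hxc).symm.trans
    ((hor hxv hd.ne').resolve_left hxd))

theorem exists_le_one_add_mul_and_mul_le [Fintype V] [Nontrivial V]
    [DecidableRel G.Adj] (h : AreCISTs G T) (hr : 0 < r) {s t : Finset V}
    (hbip : G.IsBipartiteWith ↑s ↑t) (hcard : Fintype.card V = 2 * #s) {b : ℕ}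
    (hdeg : ∀ v, G.degree v ≤ r + b) : ∃ n, #s ≤ 1 + b * n ∧ r * n ≤ #s := by
  classical
  have : Nonempty (Fin r) := ⟨⟨0, hr⟩⟩
  set I : Fin r → Finset V := fun i => {v ∈ s | 2 ≤ (T i).degree v}
  obtain ⟨i, hi⟩ := exists_card_mul_card_le_of_pairwise_disjoint (t := I)
    (fun i => filter_subset _ _)
    fun i j hij => disjoint_filter.2 fun v _ hvi hvj => hij (h.eq_of_one_lt_degree hvi hvj)
  refine ⟨#(I i), ?_, by simpa using hi⟩
  refine (h.1 i).2.connected.card_le_one_add_mul_card_filter (hbip.mono (h.1 i).1) hcard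
    fun v _ => ?_
  have := h.degree_add_le i v
  have := hdeg v
  omega

end AreCISTs

/-- Necessary condition for a `k`-regular, `k`-connected bipartite graph to contain
`⌊k/2⌋` completely independent spanning trees:
`⌈((|V|/2) - 1) / ⌈k/2⌉⌉ ≤ ⌊(|V|/2) / ⌊k/2⌋⌋`. -/
theorem cist_necessary_condition_bipartite {V : Type*} [Fintype V]
    (G : SimpleGraph V) (k : ℕ)
    (X Y : Set V) (hdisj : Disjoint X Y) (hunion : X ∪ Y = Set.univ)
    (hbip : ∀ u v : V, G.Adj u v → (u ∈ X ∧ v ∈ Y) ∨ (u ∈ Y ∧ v ∈ X))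
    (hreg : IsKRegular G k) (hconn : KConnected G k)
    (hcist : ∃ T : Fin (k / 2) → SimpleGraph V, AreCISTs G T) :
    ⌈((Fintype.card V : ℚ) / 2 - 1) / ((⌈(k : ℚ) / 2⌉ : ℤ) : ℚ)⌉ ≤
      ⌊((Fintype.card V : ℚ) / 2) / ((⌊(k : ℚ) / 2⌋ : ℤ) : ℚ)⌋ := by
  classical
  obtain rfl | hk := Nat.eq_zero_or_pos k
  · simp
  set A := X.toFinset
  have hG : G.IsBipartiteWith ↑A ↑Y.toFinset := by simpa [A] using ⟨hdisj, hbip⟩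
  have hcard : Fintype.card V = 2 * #A :=
    hG.card_eq_two_mul_of_degree_eq (by ext v; simpa [A] using hunion.ge (Set.mem_univ v)) hk
      fun v => hreg.degree_eq v
  rw [hcard, Rat.ceil_natCast_div_two, Rat.floor_natCast_div_two, Nat.cast_mul, Nat.cast_two,
    mul_div_cancel_left₀ _ two_ne_zero]
  obtain rfl | hk2 := (Nat.succ_le_of_lt hk).eq_or_lt
  · have hA := (hconn.connected hk).card_le_one_add_mul_card_filter hG hcard (b := 0)
      fun v _ => (hreg.degree_eq v).le
    rw [zero_mul, add_zero] at hA
    rw [show (1 + 1) / 2 = 1 from rfl, show 1 / 2 = 0 from rfl]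
    simpa [Int.ceil_le] using (by exact_mod_cast hA : (#A : ℚ) ≤ 1)
  obtain ⟨T, hT⟩ := hcist
  have : Nontrivial V := Finite.one_lt_card_iff_nontrivial.1 (by have := hconn.1; omega)
  obtain ⟨n, hn, hnA⟩ := hT.exists_le_one_add_mul_and_mul_le (by omega) hG hcard
    (b := (k + 1) / 2) fun v => (hreg.degree_eq v).trans_le (by omega)
  exact ceil_sub_one_div_le_floor_div (by omega) (by omega) hn hnA
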